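/- Let n ≥ 2 and let 𝒱ₚ ⊆ Mₙ(ℂ) be the subspace of matrices whose entries at positions (1,p), (1,p+1), …, (1,n) all vanish, where p = 2. Then A = E₁₁ is left-symmetric relative to 𝒱₂: for every B ∈ 𝒱₂, if E₁₁ ⊥ B then B ⊥ E₁₁ (Birkhoff–James orthogonality in operator norm). -/

import Mathlib

/-!
Write `E = E₁₁` and let `b` be the `(1,1)` entry of `B ∈ 𝒱₂`. The first row of `E + c B` is
`(1 + c b) e₁ᵀ` and its other rows are those of `c B`, so
`‖(E + c B) x‖² ≤ (|1 + c b|² + |c|² ‖B‖²) ‖x‖²`. If `b ≠ 0`, the choice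
`c = -b̄ / (|b|² + ‖B‖²)` makes this factor `‖B‖² / (|b|² + ‖B‖²) < 1 = ‖E‖`, so `E ⊥ B` forces
`b = 0`. Then the first row of `B` vanishes while `B + c E` differs from `B` only in the first
row, hence `‖B x‖ ≤ ‖(B + c E) x‖` for every `x`, that is `B ⊥ E`.
-/

open Matrix

/-- The operator (spectral) norm of a complex matrix, induced by the Euclidean norm on `ℂⁿ`. -/
noncomputable def opNorm {n : ℕ} (A : Matrix (Fin n) (Fin n) ℂ) : ℝ :=
  ‖Matrix.toEuclideanCLM (𝕜 := ℂ) (n := Fin n) A‖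

/-- Birkhoff–James orthogonality of matrices with respect to the operator norm. -/
def BJ {n : ℕ} (A B : Matrix (Fin n) (Fin n) ℂ) : Prop :=
  ∀ c : ℂ, opNorm A ≤ opNorm (A + c • B)

namespace EuclideanSpace

variable {𝕜 ι : Type*} [RCLike 𝕜] [Fintype ι] [DecidableEq ι]

theorem norm_sq_le_norm_apply_sq_add_norm_sq {v w : EuclideanSpace 𝕜 ι} (i₀ : ι)
    (h : ∀ i ≠ i₀, v i = w i) : ‖v‖ ^ 2 ≤ ‖v i₀‖ ^ 2 + ‖w‖ ^ 2 := by
  rw [norm_sq_eq, norm_sq_eq w, ← Finset.add_sum_erase _ _ (Finset.mem_univ i₀)]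
  gcongr
  calc ∑ i ∈ Finset.univ.erase i₀, ‖v i‖ ^ 2
      = ∑ i ∈ Finset.univ.erase i₀, ‖w i‖ ^ 2 :=
        Finset.sum_congr rfl fun i hi => by rw [h i (Finset.ne_of_mem_erase hi)]
    _ ≤ ∑ i, ‖w i‖ ^ 2 :=
        Finset.sum_le_sum_of_subset_of_nonneg (Finset.subset_univ _) fun _ _ _ => by positivity

theorem norm_le_of_apply_eq_zero_of_eq_of_ne {v w : EuclideanSpace 𝕜 ι} {i₀ : ι}
    (h₀ : v i₀ = 0) (h : ∀ i ≠ i₀, v i = w i) : ‖v‖ ≤ ‖w‖ := by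
  have := norm_sq_le_norm_apply_sq_add_norm_sq i₀ h
  rw [h₀, norm_zero, zero_pow two_ne_zero, zero_add] at this
  exact pow_le_pow_iff_left₀ (norm_nonneg _) (norm_nonneg _) two_ne_zero |>.mp this

end EuclideanSpace

namespace Matrix

variable {𝕜 ι : Type*} [RCLike 𝕜] [Fintype ι] [DecidableEq ι]

theorem toEuclideanCLM_apply (A : Matrix ι ι 𝕜) (x : EuclideanSpace 𝕜 ι) (i : ι) :
    toEuclideanCLM (n := ι) (𝕜 := 𝕜) A x i = ∑ j, A i j * x j := rfl

theorem toEuclideanCLM_single_one_apply_of_ne {i₀ i : ι} (hi : i ≠ i₀)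
    (x : EuclideanSpace 𝕜 ι) : toEuclideanCLM (n := ι) (𝕜 := 𝕜) (single i₀ i₀ 1) x i = 0 := by
  simp [toEuclideanCLM_apply, single, hi.symm]

theorem toEuclideanCLM_single_one_apply_self (i₀ : ι) (x : EuclideanSpace 𝕜 ι) :
    toEuclideanCLM (n := ι) (𝕜 := 𝕜) (single i₀ i₀ 1) x i₀ = x i₀ := by
  simp [toEuclideanCLM_apply, single]

theorem toEuclideanCLM_apply_of_row_eq {B : Matrix ι ι 𝕜} {i₀ : ι}
    (hrow : ∀ j ≠ i₀, B i₀ j = 0) (x : EuclideanSpace 𝕜 ι) :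
    toEuclideanCLM (n := ι) (𝕜 := 𝕜) B x i₀ = B i₀ i₀ * x i₀ := by
  rw [toEuclideanCLM_apply, Finset.sum_eq_single i₀ (fun j _ hj => by rw [hrow j hj, zero_mul])
    (by simp)]

end Matrix

section

variable {n : ℕ}

local notation "T" => Matrix.toEuclideanCLM (𝕜 := ℂ) (n := Fin n)

theorem opNorm_le_sqrt_of_norm_sq_le {A : Matrix (Fin n) (Fin n) ℂ} {C : ℝ}
    (h : ∀ x, ‖T A x‖ ^ 2 ≤ C * ‖x‖ ^ 2) : opNorm A ≤ √C :=
  (T A).opNorm_le_bound (Real.sqrt_nonneg C) fun x => by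
    rw [← Real.sqrt_sq (norm_nonneg (T A x)), ← Real.sqrt_sq (norm_nonneg x),
      ← Real.sqrt_mul' _ (sq_nonneg _)]
    exact Real.sqrt_le_sqrt (h x)

open scoped Matrix.Norms.L2Operator in
theorem opNorm_single_one (i : Fin n) : opNorm (single i i (1 : ℂ)) = 1 := by
  rw [opNorm, ← cstar_norm_def, ← diagonal_single, l2_opNorm_diagonal, Pi.norm_single, norm_one]

theorem norm_toEuclideanCLM_single_add_smul_sq_le {B : Matrix (Fin n) (Fin n) ℂ} {i₀ : Fin n}
    (hrow : ∀ j ≠ i₀, B i₀ j = 0) (c : ℂ) (x : EuclideanSpace ℂ (Fin n)) :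
    ‖T (single i₀ i₀ 1 + c • B) x‖ ^ 2
      ≤ (‖1 + c * B i₀ i₀‖ ^ 2 + ‖c‖ ^ 2 * opNorm B ^ 2) * ‖x‖ ^ 2 := by
  have hsplit : T (single i₀ i₀ 1 + c • B) x = T (single i₀ i₀ 1) x + c • T B x := by
    rw [map_add, map_smul, _root_.add_apply, _root_.smul_apply]
  have hself : T (single i₀ i₀ 1 + c • B) x i₀ = (1 + c * B i₀ i₀) * x i₀ := by
    rw [hsplit, PiLp.add_apply, PiLp.smul_apply, toEuclideanCLM_single_one_apply_self,
      toEuclideanCLM_apply_of_row_eq hrow, smul_eq_mul]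
    ring
  have hoff : ∀ i ≠ i₀, T (single i₀ i₀ 1 + c • B) x i = (c • T B x) i := fun i hi => by
    rw [hsplit, PiLp.add_apply, toEuclideanCLM_single_one_apply_of_ne hi, zero_add]
  have hB : ‖T B x‖ ≤ opNorm B * ‖x‖ := (T B).le_opNorm x
  calc ‖T (single i₀ i₀ 1 + c • B) x‖ ^ 2
      ≤ ‖(1 + c * B i₀ i₀) * x i₀‖ ^ 2 + ‖c • T B x‖ ^ 2 :=
        hself ▸ EuclideanSpace.norm_sq_le_norm_apply_sq_add_norm_sq i₀ hoff
    _ = ‖1 + c * B i₀ i₀‖ ^ 2 * ‖x i₀‖ ^ 2 + ‖c‖ ^ 2 * ‖T B x‖ ^ 2 := by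
        rw [norm_mul, norm_smul, mul_pow, mul_pow]
    _ ≤ ‖1 + c * B i₀ i₀‖ ^ 2 * ‖x‖ ^ 2 + ‖c‖ ^ 2 * (opNorm B * ‖x‖) ^ 2 := by
        gcongr
        exact PiLp.norm_apply_le x i₀
    _ = _ := by ring

theorem exists_opNorm_single_add_smul_lt_one {B : Matrix (Fin n) (Fin n) ℂ} {i₀ : Fin n}
    (hrow : ∀ j ≠ i₀, B i₀ j = 0) (hb : B i₀ i₀ ≠ 0) :
    ∃ c : ℂ, opNorm (single i₀ i₀ 1 + c • B) < 1 := by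
  set b := B i₀ i₀
  set K := opNorm B
  set D := ‖b‖ ^ 2 + K ^ 2
  have hβ : 0 < ‖b‖ ^ 2 := by positivity
  have hD : 0 < D := by positivity
  set c : ℂ := -(starRingEnd ℂ b) / D
  have hcb : 1 + c * b = ((K ^ 2 / D : ℝ) : ℂ) := by
    have : K ^ 2 / D = 1 - ‖b‖ ^ 2 / D := by field_simp; simp only [D]; ring
    simp only [this, c, neg_div, neg_mul, div_mul_eq_mul_div, Complex.conj_mul']
    push_cast
    ring
  have hc : ‖c‖ = ‖b‖ / D := by
    simp [c, Complex.norm_real, abs_of_pos hD]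
  have hbound : ‖1 + c * b‖ ^ 2 + ‖c‖ ^ 2 * K ^ 2 = K ^ 2 / D := by
    rw [hcb, hc, Complex.norm_real, Real.norm_of_nonneg (by positivity)]
    field_simp
    simp only [D]
    ring
  refine ⟨c, ?_⟩
  calc opNorm (single i₀ i₀ 1 + c • B) ≤ √(K ^ 2 / D) := opNorm_le_sqrt_of_norm_sq_le
        fun x => hbound ▸ norm_toEuclideanCLM_single_add_smul_sq_le hrow c x
    _ < 1 := by
        rw [Real.sqrt_lt' one_pos, one_pow, div_lt_one hD]
        linarith

theorem apply_self_eq_zero_of_BJ_single {B : Matrix (Fin n) (Fin n) ℂ} {i₀ : Fin n}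
    (hrow : ∀ j ≠ i₀, B i₀ j = 0) (h : BJ (single i₀ i₀ 1) B) : B i₀ i₀ = 0 := by
  by_contra hb
  obtain ⟨c, hc⟩ := exists_opNorm_single_add_smul_lt_one hrow hb
  have := h c
  rw [opNorm_single_one] at this
  linarith

theorem BJ_of_row_eq_zero {B C : Matrix (Fin n) (Fin n) ℂ} {i₀ : Fin n}
    (hB : ∀ j, B i₀ j = 0) (hC : ∀ i ≠ i₀, ∀ j, C i j = 0) : BJ B C := fun c =>
  (T B).opNorm_le_bound (norm_nonneg _) fun x => by
    have hzero : T B x i₀ = 0 := by simp [toEuclideanCLM_apply, hB]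
    have heq : ∀ i ≠ i₀, T B x i = T (B + c • C) x i := fun i hi => by
      simp [toEuclideanCLM_apply, hC i hi]
    exact (EuclideanSpace.norm_le_of_apply_eq_zero_of_eq_of_ne hzero heq).trans
      ((T (B + c • C)).le_opNorm x)

end

/-- `E₁₁` is left-symmetric relative to the space `𝒱₂` of matrices whose first row
vanishes except possibly at the `(1,1)` entry. -/
theorem stmt10 {n : ℕ} (hn : 2 ≤ n) (B : Matrix (Fin n) (Fin n) ℂ)
    (hBmem : ∀ j : Fin n, j ≠ ⟨0, by omega⟩ → B ⟨0, by omega⟩ j = 0)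
    (h : BJ (Matrix.single (⟨0, by omega⟩ : Fin n) ⟨0, by omega⟩ (1 : ℂ)) B) :
    BJ B (Matrix.single (⟨0, by omega⟩ : Fin n) ⟨0, by omega⟩ (1 : ℂ)) := by
  set i₀ : Fin n := ⟨0, by omega⟩
  have hdiag : B i₀ i₀ = 0 := apply_self_eq_zero_of_BJ_single hBmem h
  refine BJ_of_row_eq_zero (i₀ := i₀) (fun j => ?_) fun i hi j => ?_
  · rcases eq_or_ne j i₀ with rfl | hj
    exacts [hdiag, hBmem j hj]
  · simp [single, hi.symm]
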